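/- The series K(x) satisfies the third-order linear q-difference equation K(x) - K(xq) + (xq²/(1-xq²))·K(xq²) - (x³q⁶/((1-xq)(1-xq²)(1-xq³)))·K(xq³) = 0, where K(x) = Σ_{n≥0} (x^n q^{n(n+1)/2} / (xq;q)_n) · Σ_{k=0}^{n} (-1)^k/(q;q)_k. -/

import Mathlib

/-!
Write `K_s, H_s, J_s` for the series evaluated at `x q^s`. Termwise one checks the first-order
relations
`(1 - q^{s+1} x) (K_s - H_{s+1}) = q^{s+1} x K_{s+1}`,
`(1 - q^s x) H_s = J_s - q^s x H_{s+1}`,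
`(1 - q^{s+1} x) (J_s - H_{s+1}) = -q^s x J_{s+1}`,
each of which comes down to a one-step recurrence for the coefficients. Eliminating `J` gives a
second-order equation for `H`, and substituting `H_{s+1}` from the first relation turns it into the
third-order equation for `K`. The infinite sums are `X`-adic: the `n`-th term is divisible by
`xⁿ`.
-/

open PowerSeries

noncomputable section
namespace FC

/-- The field `ℚ(q)` of rational functions in `q`. -/
abbrev K : Type := RatFunc ℚ

/-- The variable `q`. -/
def q : K := RatFunc.X

/-- The q-Pochhammer symbol `(a; q)_n = ∏_{i=0}^{n-1} (1 - a q^i)`. -/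
def poch (a : K) (n : ℕ) : K := ∏ i ∈ Finset.range n, (1 - a * q ^ i)

/-- The power series `(x q^s; q)_n = ∏_{i=0}^{n-1} (1 - q^{s+i} x)` in the variable `x`. -/
def pochX (s n : ℕ) : PowerSeries K :=
  ∏ i ∈ Finset.range n, (1 - PowerSeries.C (q ^ (s + i)) * PowerSeries.X)

/-- `J(x) = Σ_{n≥0} (-x)^n q^{C(n,2)} / ((q;q)_n (xq;q)_n)`, defined coefficientwise:
the coefficient of `x^N` is `Σ_{n=0}^{N} (-1)^n q^{C(n,2)}/(q;q)_n · [x^{N-n}] (xq;q)_n⁻¹`. -/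
def J : PowerSeries K :=
  PowerSeries.mk fun N => ∑ n ∈ Finset.range (N + 1),
    ((-1 : K) ^ n * q ^ n.choose 2 / poch q n) * PowerSeries.coeff (N - n) (pochX 1 n)⁻¹

/-- `H(x) = Σ_{n≥0} (-x)^n q^{C(n,2)} / ((q;q)_n (x;q)_n)`. -/
def H : PowerSeries K :=
  PowerSeries.mk fun N => ∑ n ∈ Finset.range (N + 1),
    ((-1 : K) ^ n * q ^ n.choose 2 / poch q n) * PowerSeries.coeff (N - n) (pochX 0 n)⁻¹

/-- `K(x) = Σ_{n≥0} (x^n q^{n(n+1)/2} / (xq;q)_n) · Σ_{k=0}^n (-1)^k/(q;q)_k`. -/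
def Kq : PowerSeries K :=
  PowerSeries.mk fun N => ∑ n ∈ Finset.range (N + 1),
    (q ^ (n * (n + 1) / 2) * ∑ k ∈ Finset.range (n + 1), (-1 : K) ^ k / poch q k) *
      PowerSeries.coeff (N - n) (pochX 1 n)⁻¹

end FC

namespace PowerSeries

variable {R : Type*} [CommRing R]

/-- The `X`-adic sum of `∑ t n`, meaningful when `X ^ n ∣ t n`: the coefficient of `X ^ N` only
involves the first `N + 1` terms. -/
def xadicSum (t : ℕ → R⟦X⟧) : R⟦X⟧ :=
  mk fun N => coeff N (∑ n ∈ Finset.range (N + 1), t n)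

theorem coeff_xadicSum_of_le {t : ℕ → R⟦X⟧} (ht : ∀ n, X ^ n ∣ t n) {N M : ℕ} (h : N ≤ M) :
    coeff N (xadicSum t) = coeff N (∑ n ∈ Finset.range (M + 1), t n) := by
  rw [xadicSum, coeff_mk, ← Finset.sum_range_add_sum_Ico _ (by omega : N + 1 ≤ M + 1), map_add,
    left_eq_add, map_sum]
  refine Finset.sum_eq_zero fun n hn => X_pow_dvd_iff.mp (ht n) N ?_
  simp only [Finset.mem_Ico] at hn
  omega

theorem xadicSum_sub (t u : ℕ → R⟦X⟧) :
    xadicSum t - xadicSum u = xadicSum fun n => t n - u n := by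
  ext N
  simp [xadicSum, Finset.sum_sub_distrib]

theorem rescale_xadicSum (a : R) (t : ℕ → R⟦X⟧) :
    rescale a (xadicSum t) = xadicSum fun n => rescale a (t n) := by
  ext N
  simp [xadicSum, Finset.mul_sum]

theorem mul_xadicSum (P : R⟦X⟧) {t : ℕ → R⟦X⟧} (ht : ∀ n, X ^ n ∣ t n) :
    P * xadicSum t = xadicSum fun n => P * t n := by
  ext N
  rw [coeff_mul]
  conv_rhs => rw [xadicSum, coeff_mk, ← Finset.mul_sum, coeff_mul]
  refine Finset.sum_congr rfl fun ij hij => ?_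
  rw [coeff_xadicSum_of_le ht (Finset.HasAntidiagonal.antidiagonal.snd_le hij)]

theorem xadicSum_eq_add_xadicSum_succ {t : ℕ → R⟦X⟧} (ht : ∀ n, X ^ n ∣ t n) :
    xadicSum t = t 0 + xadicSum fun n => t (n + 1) := by
  ext N
  rw [coeff_xadicSum_of_le ht N.le_succ, Finset.sum_range_succ', map_add, map_add, add_comm,
    xadicSum, coeff_mk]

theorem mk_sum_mul_coeff_eq_xadicSum (c : ℕ → R) (g : ℕ → R⟦X⟧) :
    (mk fun N => ∑ n ∈ Finset.range (N + 1), c n * coeff (N - n) (g n)) =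
      xadicSum fun n => C (c n) * X ^ n * g n := by
  ext N
  rw [coeff_mk, xadicSum, coeff_mk, map_sum]
  refine Finset.sum_congr rfl fun n hn => ?_
  rw [mul_assoc, coeff_C_mul, coeff_X_pow_mul', if_pos (Finset.mem_range_succ_iff.mp hn)]

theorem rescale_C (a b : R) : rescale a (C b) = C b := by
  ext (_ | n) <;> simp [coeff_C]

theorem rescale_inv {k : Type*} [Field k] (a : k) (φ : k⟦X⟧) :
    rescale a φ⁻¹ = (rescale a φ)⁻¹ := by
  have hc : constantCoeff (rescale a φ) = constantCoeff φ := by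
    rw [← coeff_zero_eq_constantCoeff_apply, coeff_rescale, pow_zero, one_mul,
      coeff_zero_eq_constantCoeff_apply]
  by_cases h : constantCoeff φ = 0
  · rw [inv_eq_zero.mpr h, inv_eq_zero.mpr (hc.trans h), map_zero]
  · rw [eq_inv_iff_mul_eq_one (hc ▸ h), ← map_mul, PowerSeries.inv_mul_cancel _ h, map_one]

end PowerSeries

namespace FC

theorem q_pow_ne_one {n : ℕ} (hn : n ≠ 0) : q ^ n ≠ 1 := by
  intro h
  have hX : (Polynomial.X : Polynomial ℚ) ^ n = 1 := RatFunc.algebraMap_injective ℚ <| by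
    rw [map_pow, RatFunc.algebraMap_X, map_one]
    exact h
  simpa [hn] using congrArg Polynomial.natDegree hX

theorem one_sub_q_pow_ne_zero {n : ℕ} (hn : n ≠ 0) : 1 - q ^ n ≠ 0 :=
  sub_ne_zero.mpr (q_pow_ne_one hn).symm

theorem poch_succ (a : K) (n : ℕ) : poch a (n + 1) = poch a n * (1 - a * q ^ n) :=
  Finset.prod_range_succ _ _

theorem poch_q_ne_zero (n : ℕ) : poch q n ≠ 0 :=
  Finset.prod_ne_zero_iff.mpr fun i _ => by
    rw [← pow_succ']
    exact one_sub_q_pow_ne_zero i.succ_ne_zero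

def jCoeff (n : ℕ) : K := (-1) ^ n * q ^ n.choose 2 / poch q n

def kqCoeff (n : ℕ) : K :=
  q ^ (n * (n + 1) / 2) * ∑ k ∈ Finset.range (n + 1), (-1 : K) ^ k / poch q k

theorem choose_two_succ (n : ℕ) : (n + 1).choose 2 = n.choose 2 + n := by
  simp [Nat.choose_succ_succ, add_comm]

theorem mul_succ_div_two_eq_choose (n : ℕ) : n * (n + 1) / 2 = (n + 1).choose 2 := by
  rw [Nat.choose_two_right, Nat.add_sub_cancel, mul_comm]

theorem jCoeff_succ_mul (n : ℕ) : jCoeff (n + 1) * (1 - q ^ (n + 1)) = -(q ^ n * jCoeff n) := by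
  have hp := poch_q_ne_zero n
  have hs := one_sub_q_pow_ne_zero n.succ_ne_zero
  rw [jCoeff, jCoeff, poch_succ, ← pow_succ', choose_two_succ]
  field_simp
  ring

theorem kqCoeff_succ_sub (n : ℕ) :
    kqCoeff (n + 1) - jCoeff (n + 1) * q ^ (n + 1) = q ^ (n + 1) * kqCoeff n := by
  rw [kqCoeff, kqCoeff, jCoeff, Finset.sum_range_succ, mul_succ_div_two_eq_choose,
    mul_succ_div_two_eq_choose, choose_two_succ (n + 1)]
  ring

theorem pochX_succ' (s n : ℕ) : pochX s (n + 1) = (1 - C (q ^ s) * X) * pochX (s + 1) n := by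
  rw [pochX, Finset.prod_range_succ', add_zero, mul_comm, pochX]
  exact congrArg _ (Finset.prod_congr rfl fun i _ => by rw [add_assoc, add_comm 1 i])

theorem rescale_pochX (a s n : ℕ) : rescale (q ^ a) (pochX s n) = pochX (a + s) n := by
  simp only [pochX, map_prod, map_sub, map_one, map_mul, rescale_C, rescale_X]
  refine Finset.prod_congr rfl fun i _ => ?_
  rw [← mul_assoc, ← map_mul, ← pow_add, add_comm a s, add_right_comm]

def qTerm (s n : ℕ) (c : K) : K⟦X⟧ := C c * X ^ n * (pochX s n)⁻¹

theorem X_pow_dvd_qTerm (s n : ℕ) (c : K) : X ^ n ∣ qTerm s n c :=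
  ⟨C c * (pochX s n)⁻¹, by rw [qTerm]; ring⟩

theorem qTerm_zero (s : ℕ) (c : K) : qTerm s 0 c = C c := by
  simp [qTerm, pochX]

theorem qTerm_sub (s n : ℕ) (a b : K) : qTerm s n a - qTerm s n b = qTerm s n (a - b) := by
  simp only [qTerm, map_sub]
  ring

theorem C_mul_qTerm (s n : ℕ) (a c : K) : C a * qTerm s n c = qTerm s n (a * c) := by
  simp only [qTerm, map_mul]
  ring

theorem rescale_qTerm (a s n : ℕ) (c : K) :
    rescale (q ^ a) (qTerm s n c) = qTerm (a + s) n (q ^ (a * n) * c) := by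
  simp only [qTerm, map_mul, map_pow, rescale_C, rescale_X, rescale_inv, rescale_pochX]
  ring

theorem one_sub_mul_qTerm_succ (s n : ℕ) (c : K) :
    (1 - C (q ^ s) * X) * qTerm s (n + 1) c = X * qTerm (s + 1) n c := by
  have hu : (1 - C (q ^ s) * X) * (1 - C (q ^ s) * X)⁻¹ = 1 :=
    PowerSeries.mul_inv_cancel _ (by simp)
  rw [qTerm, qTerm, pochX_succ', PowerSeries.mul_inv_rev]
  linear_combination (C c * X ^ (n + 1) * (pochX (s + 1) n)⁻¹) * hu

theorem one_sub_mul_qTerm (s n : ℕ) (c : K) :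
    (1 - C (q ^ s) * X) * qTerm s n c =
      qTerm (s + 1) n c - X * qTerm (s + 1) n (q ^ (s + n) * c) := by
  have hP : pochX s n * (pochX s n)⁻¹ = 1 :=
    PowerSeries.mul_inv_cancel _ (by simp [pochX, map_prod])
  have hQ : pochX (s + 1) n * (pochX (s + 1) n)⁻¹ = 1 :=
    PowerSeries.mul_inv_cancel _ (by simp [pochX, map_prod])
  have hPQ : (1 - C (q ^ s) * X) * pochX (s + 1) n = pochX s n * (1 - C (q ^ (s + n)) * X) := by
    rw [← pochX_succ', pochX, Finset.prod_range_succ, pochX]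
  simp only [qTerm, map_mul]
  linear_combination (C c * X ^ n) * ((pochX s n)⁻¹ * (pochX (s + 1) n)⁻¹ * hPQ
    - (1 - C (q ^ s) * X) * (pochX s n)⁻¹ * hQ
    + (1 - C (q ^ (s + n)) * X) * (pochX (s + 1) n)⁻¹ * hP)

theorem Kq_eq_xadicSum : Kq = xadicSum fun n => qTerm 1 n (kqCoeff n) :=
  mk_sum_mul_coeff_eq_xadicSum kqCoeff fun n => (pochX 1 n)⁻¹

theorem J_eq_xadicSum : J = xadicSum fun n => qTerm 1 n (jCoeff n) :=
  mk_sum_mul_coeff_eq_xadicSum jCoeff fun n => (pochX 1 n)⁻¹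

theorem H_eq_xadicSum : H = xadicSum fun n => qTerm 0 n (jCoeff n) :=
  mk_sum_mul_coeff_eq_xadicSum jCoeff fun n => (pochX 0 n)⁻¹

theorem Kq_sub_rescale_H (s : ℕ) :
    (1 - C (q ^ (s + 1)) * X) * (rescale (q ^ s) Kq - rescale (q ^ (s + 1)) H) =
      C (q ^ (s + 1)) * X * rescale (q ^ (s + 1)) Kq := by
  simp only [Kq_eq_xadicSum, H_eq_xadicSum, rescale_xadicSum, rescale_qTerm, add_zero,
    xadicSum_sub, qTerm_sub]
  rw [mul_xadicSum _ fun n => X_pow_dvd_qTerm _ _ _, mul_xadicSum _ fun n => X_pow_dvd_qTerm _ _ _,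
    xadicSum_eq_add_xadicSum_succ fun n => (X_pow_dvd_qTerm _ _ _).mul_left _,
    show (1 - C (q ^ (s + 1)) * X) * qTerm (s + 1) 0 _ = 0 by
      simp [kqCoeff, jCoeff, poch, qTerm_zero],
    zero_add]
  refine congrArg xadicSum (funext fun n => ?_)
  rw [one_sub_mul_qTerm_succ, mul_right_comm, C_mul_qTerm, mul_comm]
  congr 2
  linear_combination q ^ (s * (n + 1)) * kqCoeff_succ_sub n

theorem one_sub_mul_rescale_H (s : ℕ) :
    (1 - C (q ^ s) * X) * rescale (q ^ s) H =
      rescale (q ^ s) J - C (q ^ s) * X * rescale (q ^ (s + 1)) H := by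
  simp only [J_eq_xadicSum, H_eq_xadicSum, rescale_xadicSum, rescale_qTerm, add_zero]
  rw [mul_xadicSum _ fun n => X_pow_dvd_qTerm _ _ _, mul_xadicSum _ fun n => X_pow_dvd_qTerm _ _ _,
    xadicSum_sub]
  refine congrArg xadicSum (funext fun n => ?_)
  rw [one_sub_mul_qTerm, mul_right_comm, C_mul_qTerm, mul_comm _ X,
    show q ^ (s + n) * (q ^ (s * n) * jCoeff n) = q ^ s * (q ^ ((s + 1) * n) * jCoeff n) by ring]

theorem J_sub_rescale_H (s : ℕ) :
    (1 - C (q ^ (s + 1)) * X) * (rescale (q ^ s) J - rescale (q ^ (s + 1)) H) =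
      -C (q ^ s) * X * rescale (q ^ (s + 1)) J := by
  simp only [J_eq_xadicSum, H_eq_xadicSum, rescale_xadicSum, rescale_qTerm, add_zero,
    xadicSum_sub, qTerm_sub]
  rw [mul_xadicSum _ fun n => X_pow_dvd_qTerm _ _ _, mul_xadicSum _ fun n => X_pow_dvd_qTerm _ _ _,
    xadicSum_eq_add_xadicSum_succ fun n => (X_pow_dvd_qTerm _ _ _).mul_left _,
    show (1 - C (q ^ (s + 1)) * X) * qTerm (s + 1) 0 _ = 0 by simp [qTerm_zero], zero_add]
  refine congrArg xadicSum (funext fun n => ?_)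
  rw [one_sub_mul_qTerm_succ, ← map_neg, mul_right_comm, C_mul_qTerm, mul_comm _ X]
  congr 2
  linear_combination q ^ (s * (n + 1)) * jCoeff_succ_mul n

theorem H_qDifference (s : ℕ) :
    (1 - C (q ^ s) * X) * (1 - C (q ^ (s + 1)) * X) * rescale (q ^ s) H
      - (1 - 2 * C (q ^ s) * X) * (1 - C (q ^ (s + 1)) * X) * rescale (q ^ (s + 1)) H
      + C (q ^ s) * C (q ^ (s + 1)) * X ^ 2 * rescale (q ^ (s + 2)) H = 0 := by
  have hJ₀ := one_sub_mul_rescale_H s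
  have hJ₁ := one_sub_mul_rescale_H (s + 1)
  rw [show s + 1 + 1 = s + 2 from rfl] at hJ₁
  have hJH := J_sub_rescale_H s
  linear_combination (1 - C (q ^ (s + 1)) * X) * hJ₀ + C (q ^ s) * X * hJ₁ + hJH

theorem Kq_qDifference_cleared :
    (1 - C q * X) * (1 - C (q ^ 2) * X) * (1 - C (q ^ 3) * X) * (Kq - rescale q Kq)
      + C (q ^ 2) * X * (1 - C q * X) * (1 - C (q ^ 3) * X) * rescale (q ^ 2) Kq
      - C (q ^ 6) * X ^ 3 * rescale (q ^ 3) Kq = 0 := by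
  have hK₀ := Kq_sub_rescale_H 0
  have hK₁ := Kq_sub_rescale_H 1
  have hK₂ := Kq_sub_rescale_H 2
  have hH := H_qDifference 1
  simp only [pow_zero, rescale_one, RingHom.id_apply, zero_add, pow_one, Nat.reduceAdd]
    at hK₀ hK₁ hK₂ hH
  have hq : C (q ^ 6) = C q * C (q ^ 2) * C (q ^ 3) := by
    rw [← map_mul, ← map_mul, ← pow_succ', ← pow_add]
  rw [hq]
  linear_combination (1 - C (q ^ 3) * X) * hH + (1 - C (q ^ 2) * X) * (1 - C (q ^ 3) * X) * hK₀
    - (1 - 2 * C q * X) * (1 - C (q ^ 3) * X) * hK₁ + C q * C (q ^ 2) * X ^ 2 * hK₂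

/-- `K(x) - K(xq) + (xq²/(1-xq²))·K(xq²)
  - (x³q⁶/((1-xq)(1-xq²)(1-xq³)))·K(xq³) = 0`. -/
theorem stmt6 :
    Kq - rescale q Kq
      + PowerSeries.X * PowerSeries.C (q ^ 2) *
          (1 - PowerSeries.C (q ^ 2) * PowerSeries.X)⁻¹ * rescale (q ^ 2) Kq
      - PowerSeries.X ^ 3 * PowerSeries.C (q ^ 6) *
          ((1 - PowerSeries.C q * PowerSeries.X) *
            (1 - PowerSeries.C (q ^ 2) * PowerSeries.X) *
            (1 - PowerSeries.C (q ^ 3) * PowerSeries.X))⁻¹ * rescale (q ^ 3) Kq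
      = 0 := by
  set D : K⟦X⟧ := (1 - C q * X) * (1 - C (q ^ 2) * X) * (1 - C (q ^ 3) * X) with hD
  have hDinv : D * D⁻¹ = 1 := PowerSeries.mul_inv_cancel _ (by simp [hD])
  have h₂inv : (1 - C (q ^ 2) * X) * (1 - C (q ^ 2) * X)⁻¹ = 1 :=
    PowerSeries.mul_inv_cancel _ (by simp)
  have hD0 : D ≠ 0 := fun h => by simp [h] at hDinv
  refine (mul_eq_zero.mp ?_).resolve_left hD0
  linear_combination Kq_qDifference_cleared
    + C (q ^ 2) * X * (1 - C q * X) * (1 - C (q ^ 3) * X) * rescale (q ^ 2) Kq * h₂inv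
    - C (q ^ 6) * X ^ 3 * rescale (q ^ 3) Kq * hDinv

end FC
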